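/- If (A_{n,1}) defines an analytic linear Lie rack structure on V with associated Leibniz bracket [x,y] = A_{1,1}(x,y), then each A_{q,1} is invariant: [x, A_{q,1}(y_1,...,y_{q+1})] = Σ_{i=1}^{q+1} A_{q,1}(y_1,...,[x,y_i],...,y_{q+1}) for all x, y_1,...,y_{q+1}. -/

import Mathlib

/-!
With `A_0 = id`, the rack operation is the power series `(t • x) ▷ y = ∑ₙ tⁿ A_{n,1}(x,…,x,y)`
in `t`. Comparing coefficients of `tⁿ` in `x ▷ ((t • y) ▷ z) = (t • (x ▷ y)) ▷ (x ▷ z)` shows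
that the linear map `x ▷ ·` preserves every diagonal value `A_{n,1}(y,…,y,z)`. Since `A_{n,1}` is
symmetric in its first `n` arguments, polarization upgrades this to
`x ▷ A_{n,1}(v) = A_{n,1}(x ▷ v₁, …, x ▷ v_{n+1})`; differentiating this identity with `x`
replaced by `t • x` at `t = 0` gives the invariance, since `d/dt ((t • x) ▷ y)|₀ = A_{1,1}(x, y)`.
-/

/-- `adiag A n x y = A_{n,1}(x,…,x,y)`: the diagonal evaluation of the `n+1`-multilinear
map `A n` on `n` copies of `x` and one `y`. -/
def adiag {V : Type*} [AddCommGroup V] [Module ℝ V]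
    (A : (n : ℕ) → MultilinearMap ℝ (fun _ : Fin (n + 1) => V) V)
    (n : ℕ) (x y : V) : V :=
  A n (Fin.snoc (fun _ => x) y)

open Topology Finset

section PowerSeries

variable {𝕜 E : Type*} [NontriviallyNormedField 𝕜] [NormedAddCommGroup E] [NormedSpace 𝕜 E]

variable (𝕜) in
noncomputable def FormalMultilinearSeries.ofCoeffs (a : ℕ → E) : FormalMultilinearSeries 𝕜 𝕜 E :=
  fun n => ContinuousMultilinearMap.mkPiRing 𝕜 (Fin n) (a n)

@[simp]
theorem FormalMultilinearSeries.coeff_ofCoeffs (a : ℕ → E) (n : ℕ) :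
    (ofCoeffs 𝕜 a).coeff n = a n := by
  simp [coeff, ofCoeffs]

theorem hasFPowerSeriesAt_ofCoeffs {a : ℕ → E} {f : 𝕜 → E}
    (h : ∀ᶠ t in 𝓝 0, HasSum (fun n => t ^ n • a n) (f t)) :
    HasFPowerSeriesAt f (FormalMultilinearSeries.ofCoeffs 𝕜 a) 0 := by
  simpa [hasFPowerSeriesAt_iff] using h

theorem eq_of_hasSum_pow_smul {a b : ℕ → E} {f : 𝕜 → E}
    (ha : ∀ᶠ t in 𝓝 0, HasSum (fun n => t ^ n • a n) (f t))
    (hb : ∀ᶠ t in 𝓝 0, HasSum (fun n => t ^ n • b n) (f t)) : a = b := by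
  have h := (hasFPowerSeriesAt_ofCoeffs ha).eq_formalMultilinearSeries
    (hasFPowerSeriesAt_ofCoeffs hb)
  funext n
  simpa using congrArg (·.coeff n) h

theorem hasDerivAt_of_hasSum_pow_smul {a : ℕ → E} {f : 𝕜 → E}
    (h : ∀ᶠ t in 𝓝 0, HasSum (fun n => t ^ n • a n) (f t)) : HasDerivAt f (a 1) 0 := by
  simpa [FormalMultilinearSeries.ofCoeffs] using (hasFPowerSeriesAt_ofCoeffs h).hasDerivAt

end PowerSeries

theorem MultilinearMap.continuous_of_finiteDimensional {𝕜 ι F : Type*} {E : ι → Type*}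
    [NontriviallyNormedField 𝕜] [CompleteSpace 𝕜] [Fintype ι]
    [∀ i, NormedAddCommGroup (E i)] [∀ i, NormedSpace 𝕜 (E i)] [∀ i, FiniteDimensional 𝕜 (E i)]
    [NormedAddCommGroup F] [NormedSpace 𝕜 F] (f : MultilinearMap 𝕜 E F) : Continuous f := by
  classical
  let b i := Module.finBasis 𝕜 (E i)
  have hf : ⇑f = fun m => ∑ r : ∀ i, Fin (Module.finrank 𝕜 (E i)),
      (∏ i, (b i).coord (r i) (m i)) • f fun i => b i (r i) := by
    funext m
    conv_lhs => rw [← funext fun i => (b i).sum_repr (m i)]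
    simp only [f.map_sum, f.map_smul_univ, Module.Basis.coord_apply]
  rw [hf]
  refine continuous_finsetSum _ fun r _ => .smul ?_ continuous_const
  exact continuous_finsetProd _ fun i _ =>
    ((b i).coord (r i)).continuous_of_finiteDimensional.comp (continuous_apply i)

namespace ContinuousMultilinearMap

variable {𝕜 E F : Type*} [NontriviallyNormedField 𝕜] [CharZero 𝕜]
  [NormedAddCommGroup E] [NormedSpace 𝕜 E] [NormedAddCommGroup F] [NormedSpace 𝕜 F]

theorem map_update_zero_eq_zero_of_map_diag_eq_zero {n : ℕ}
    (D : ContinuousMultilinearMap 𝕜 (fun _ : Fin (n + 1) => E) F)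
    (hsymm : ∀ (σ : Equiv.Perm (Fin (n + 1))) (m : Fin (n + 1) → E), D (m ∘ σ) = D m)
    (hdiag : ∀ y, D (fun _ => y) = 0) (y w : E) :
    D (Function.update (fun _ => y) 0 w) = 0 := by
  classical
  have hline : HasDerivAt (fun t : 𝕜 => fun _ : Fin (n + 1) => y + t • w) (fun _ => w) 0 :=
    hasDerivAt_pi.2 fun _ => by simpa using ((hasDerivAt_id (0 : 𝕜)).smul_const w).const_add y
  have hderiv := (D.hasFDerivAt fun _ => y).comp_hasDerivAt_of_eq 0 hline (by simp)
  have hzero : ∑ i, D (Function.update (fun _ => y) i w) = 0 := by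
    rw [← linearDeriv_apply]
    exact hderiv.unique (by simpa only [Function.comp_def, hdiag] using hasDerivAt_const 0 0)
  have hterm : ∀ i, D (Function.update (fun _ => y) i w) = D (Function.update (fun _ => y) 0 w) :=
    fun i => by
      rw [← hsymm (Equiv.swap 0 i), Function.update_comp_equiv]
      simp only [Equiv.symm_swap, Equiv.swap_apply_right]
      rfl
  simp only [hterm, sum_const, card_univ, Fintype.card_fin, ← Nat.cast_smul_eq_nsmul 𝕜] at hzero
  exact (smul_eq_zero.1 hzero).resolve_left (Nat.cast_ne_zero.2 n.succ_ne_zero)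

theorem eq_zero_of_map_diag_eq_zero : ∀ {n : ℕ}
    (D : ContinuousMultilinearMap 𝕜 (fun _ : Fin n => E) F),
    (∀ (σ : Equiv.Perm (Fin n)) (m : Fin n → E), D (m ∘ σ) = D m) →
    (∀ y, D (fun _ => y) = 0) → D = 0
  | 0, D, _, hdiag => by
    ext m
    rw [Subsingleton.elim m fun _ => 0, hdiag, zero_apply]
  | n + 1, D, hsymm, hdiag => by
    have hcurry : ∀ w, D.curryLeft w = 0 := fun w => by
      refine eq_zero_of_map_diag_eq_zero _ (fun σ m => ?_) fun y => ?_
      · simp only [curryLeft_apply]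
        convert hsymm (Equiv.Perm.decomposeFin.symm (0, σ)) (Fin.cons w m) using 2
        funext j
        cases j using Fin.cases <;> simp [Equiv.Perm.decomposeFin_symm_apply_succ]
      · rw [curryLeft_apply, ← map_update_zero_eq_zero_of_map_diag_eq_zero D hsymm hdiag y w]
        congr 1
        funext j
        cases j using Fin.cases <;> simp
    ext m
    rw [← Fin.cons_self_tail m, ← curryLeft_apply, hcurry, zero_apply, zero_apply]

end ContinuousMultilinearMap

theorem MultilinearMap.apply_comp_of_apply_snoc_const {𝕜 E F : Type*} [NontriviallyNormedField 𝕜]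
    [CompleteSpace 𝕜] [CharZero 𝕜] [NormedAddCommGroup E] [NormedSpace 𝕜 E]
    [FiniteDimensional 𝕜 E] [NormedAddCommGroup F] [NormedSpace 𝕜 F] {n : ℕ}
    (f : MultilinearMap 𝕜 (fun _ : Fin (n + 1) => E) F) (L : E →ₗ[𝕜] E) (M : F →ₗ[𝕜] F)
    (hsymm : ∀ (w : Fin n → E) (z : E) (σ : Equiv.Perm (Fin n)),
      f (Fin.snoc (w ∘ σ) z) = f (Fin.snoc w z))
    (hdiag : ∀ y z : E, M (f (Fin.snoc (fun _ => y) z)) = f (Fin.snoc (fun _ => L y) (L z)))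
    (v : Fin (n + 1) → E) : M (f v) = f (L ∘ v) := by
  suffices h : ∀ z w, M (f (Fin.snoc w z)) = f (Fin.snoc (L ∘ w) (L z)) by
    rw [← Fin.snoc_init_self v, Fin.comp_snoc]
    exact h _ _
  intro z
  let D : MultilinearMap 𝕜 (fun _ : Fin n => E) F :=
    M.compMultilinearMap ((LinearMap.applyₗ z).compMultilinearMap f.curryRight) -
      ((LinearMap.applyₗ (L z)).compMultilinearMap f.curryRight).compLinearMap fun _ => L
  have hD : D = 0 := by
    have h := ContinuousMultilinearMap.eq_zero_of_map_diag_eq_zero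
      ⟨D, D.continuous_of_finiteDimensional⟩ (fun σ w => ?_) fun y => ?_
    · ext w
      exact congrArg (· w) h
    · change D (w ∘ σ) = D w
      simp only [D, sub_apply, MultilinearMap.compLinearMap_apply,
        LinearMap.compMultilinearMap_apply, MultilinearMap.curryRight_apply,
        LinearMap.applyₗ_apply_apply]
      rw [hsymm w z σ, ← hsymm (fun i => L (w i)) (L z) σ]
      rfl
    · change D (fun _ => y) = 0
      simp [D, hdiag]
  intro w
  simpa [D, sub_eq_zero, Function.comp_def] using congrArg (· w) hD

section Rack

variable {V : Type*} [NormedAddCommGroup V] [NormedSpace ℝ V]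
  {A : (n : ℕ) → MultilinearMap ℝ (fun _ : Fin (n + 1) => V) V}

variable (A) in
noncomputable def rackOp (x y : V) : V :=
  y + ∑' n : ℕ, adiag A (n + 1) x y

theorem adiag_zero (hA0 : ∀ v : Fin 1 → V, A 0 v = v 0) (x y : V) : adiag A 0 x y = y :=
  hA0 _

theorem adiag_smul_left (n : ℕ) (t : ℝ) (x y : V) :
    adiag A n (t • x) y = t ^ n • adiag A n x y := by
  simp only [adiag, ← MultilinearMap.curryRight_apply]
  rw [show (fun _ : Fin n => t • x) = fun i => (fun _ => t) i • (fun _ => x) i from rfl,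
    MultilinearMap.map_smul_univ]
  simp

theorem adiag_add_right (n : ℕ) (x y z : V) :
    adiag A n x (y + z) = adiag A n x y + adiag A n x z :=
  (A n).snoc_add _ _ _

theorem adiag_smul_right (n : ℕ) (x : V) (c : ℝ) (y : V) :
    adiag A n x (c • y) = c • adiag A n x y :=
  (A n).snoc_smul _ _ _

theorem isLinearMap_rackOp (hconv : ∀ x y : V, Summable fun n => adiag A (n + 1) x y) (x : V) :
    IsLinearMap ℝ (rackOp A x) where
  map_add y z := by
    simp only [rackOp, adiag_add_right, (hconv x y).tsum_add (hconv x z)]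
    abel
  map_smul c y := by
    simp only [rackOp, adiag_smul_right, (hconv x y).tsum_const_smul, smul_add]

theorem hasSum_rackOp_smul (hA0 : ∀ v : Fin 1 → V, A 0 v = v 0)
    (hconv : ∀ x y : V, Summable fun n => adiag A (n + 1) x y) (t : ℝ) (x y : V) :
    HasSum (fun n => t ^ n • adiag A n x y) (rackOp A (t • x) y) := by
  rw [← hasSum_nat_add_iff' 1]
  simpa [rackOp, adiag_zero hA0, ← adiag_smul_left] using (hconv (t • x) y).hasSum

theorem rackOp_zero_left (x : V) : rackOp A 0 x = x := by
  have h (n : ℕ) : adiag A (n + 1) 0 x = 0 := by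
    simpa using adiag_smul_left (A := A) (n + 1) 0 0 x
  simp [rackOp, h]

theorem hasDerivAt_rackOp_smul (hA0 : ∀ v : Fin 1 → V, A 0 v = v 0)
    (hconv : ∀ x y : V, Summable fun n => adiag A (n + 1) x y) (x y : V) :
    HasDerivAt (fun t : ℝ => rackOp A (t • x) y) (adiag A 1 x y) 0 :=
  hasDerivAt_of_hasSum_pow_smul (.of_forall fun t => hasSum_rackOp_smul hA0 hconv t x y)

variable [FiniteDimensional ℝ V]

theorem rackOp_adiag (hA0 : ∀ v : Fin 1 → V, A 0 v = v 0)
    (hconv : ∀ x y : V, Summable fun n => adiag A (n + 1) x y)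
    (hdist : ∀ x y z : V, rackOp A x (rackOp A y z) = rackOp A (rackOp A x y) (rackOp A x z))
    (n : ℕ) (x y z : V) :
    rackOp A x (adiag A n y z) = adiag A n (rackOp A x y) (rackOp A x z) := by
  let L := (isLinearMap_rackOp hconv x).mk'
  -- both sides are the `t ^ n`-coefficient of `x ▷ ((t • y) ▷ z) = (t • (x ▷ y)) ▷ (x ▷ z)`
  refine congrFun (eq_of_hasSum_pow_smul (a := fun n => rackOp A x (adiag A n y z))
    (b := fun n => adiag A n (rackOp A x y) (rackOp A x z))
    (f := fun t : ℝ => rackOp A x (rackOp A (t • y) z))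
    (.of_forall fun t => ?_) (.of_forall fun t => ?_)) n
  · convert (hasSum_rackOp_smul hA0 hconv t y z).map L L.continuous_of_finiteDimensional using 1
    · exact funext fun k => (L.map_smul _ _).symm
    · rfl
  · rw [hdist, show rackOp A x (t • y) = t • rackOp A x y from L.map_smul t y]
    exact hasSum_rackOp_smul hA0 hconv t _ _

theorem rackOp_A (hA0 : ∀ v : Fin 1 → V, A 0 v = v 0)
    (hsymm : ∀ (n : ℕ) (x : Fin n → V) (y : V) (σ : Equiv.Perm (Fin n)),
      A n (Fin.snoc (x ∘ σ) y) = A n (Fin.snoc x y))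
    (hconv : ∀ x y : V, Summable fun n => adiag A (n + 1) x y)
    (hdist : ∀ x y z : V, rackOp A x (rackOp A y z) = rackOp A (rackOp A x y) (rackOp A x z))
    (n : ℕ) (x : V) (v : Fin (n + 1) → V) :
    rackOp A x (A n v) = A n fun i => rackOp A x (v i) :=
  (A n).apply_comp_of_apply_snoc_const (isLinearMap_rackOp hconv x).mk'
    (isLinearMap_rackOp hconv x).mk' (hsymm n) (rackOp_adiag hA0 hconv hdist n x) v

end Rack

/-- If `(A_{n,1})` defines an analytic linear Lie rack structure on `V` with associated
Leibniz bracket `[x,y] = A_{1,1}(x,y)`, then every `A_{q,1}` (`q ≥ 1`) is invariant: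
`[x, A_{q,1}(y₁,…,y_{q+1})] = Σ_i A_{q,1}(y₁,…,[x,y_i],…,y_{q+1})`. -/
theorem stmt_8 {V : Type*} [NormedAddCommGroup V] [NormedSpace ℝ V] [FiniteDimensional ℝ V]
    (A : (n : ℕ) → MultilinearMap ℝ (fun _ : Fin (n + 1) => V) V)
    (hA0 : ∀ v : Fin 1 → V, A 0 v = v 0)
    (hsymm : ∀ (n : ℕ) (x : Fin n → V) (y : V) (σ : Equiv.Perm (Fin n)),
      A n (Fin.snoc (x ∘ σ) y) = A n (Fin.snoc x y))
    (hconv : ∀ x y : V, Summable fun n => adiag A (n + 1) x y)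
    (op : V → V → V)
    (hop : ∀ x y : V, op x y = y + ∑' n : ℕ, adiag A (n + 1) x y)
    (hdist : ∀ x y z : V, op x (op y z) = op (op x y) (op x z)) :
    ∀ (q : ℕ), 1 ≤ q → ∀ (x : V) (v : Fin (q + 1) → V),
      adiag A 1 x (A q v) =
        ∑ i : Fin (q + 1), A q (Function.update v i (adiag A 1 x (v i))) := by
  intro q _ x v
  obtain rfl : op = rackOp A := funext₂ hop
  classical
  let Aq : ContinuousMultilinearMap ℝ (fun _ : Fin (q + 1) => V) V :=
    ⟨A q, (A q).continuous_of_finiteDimensional⟩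
  have hrhs := (Aq.hasFDerivAt v).comp_hasDerivAt_of_eq 0
    (hasDerivAt_pi.2 fun i => hasDerivAt_rackOp_smul hA0 hconv x (v i))
    (by simp [rackOp_zero_left])
  have hlhs := hasDerivAt_rackOp_smul hA0 hconv x (A q v)
  simp only [rackOp_A hA0 hsymm hconv hdist] at hlhs
  rw [hlhs.unique hrhs, ContinuousMultilinearMap.linearDeriv_apply]
  rfl
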